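/- Let ρ be an n×n density matrix with diagonal-entry vector d and let p be the outcome distribution of some von Neumann measurement on ρ. If p is not majorized by d (p ⊀ d), then ρ is coherent (ρ has a nonzero off-diagonal entry), and moreover the relative entropy of coherence satisfies C_r(ρ) ≥ S(d) − S(d∨p) > 0, where d∨p is the majorization join of d and p. -/

import Mathlib

open Matrix Finset ComplexOrder

/-- The vector `x` sorted in descending order. -/
noncomputable def sortDesc {n : ℕ} (x : Fin n → ℝ) : Fin n → ℝ :=
  fun i => x (Tuple.sort x i.rev)

/-- The sum of the `k` largest entries of `x`. -/
noncomputable def topSum {n : ℕ} (x : Fin n → ℝ) (k : ℕ) : ℝ :=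
  ∑ i ∈ Finset.univ.filter (fun i : Fin n => (i : ℕ) < k), sortDesc x i

/-- `Maj b a` means `b ≺ a`, i.e. `a` majorizes `b`. -/
def Maj {n : ℕ} (b a : Fin n → ℝ) : Prop := ∀ k : ℕ, topSum b k ≤ topSum a k

/-- `p` is a probability vector. -/
def IsProbVec {n : ℕ} (p : Fin n → ℝ) : Prop := (∀ i, 0 ≤ p i) ∧ ∑ i, p i = 1

/-- Shannon entropy (base 2). -/
noncomputable def shannon {ι : Type*} [Fintype ι] (p : ι → ℝ) : ℝ :=
  -∑ i, p i * Real.logb 2 (p i)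

/-- A von Neumann measurement: an orthonormal basis of `ℂⁿ`. -/
def IsONB {n : ℕ} (ψ : Fin n → (Fin n → ℂ)) : Prop :=
  ∀ i j, star (ψ i) ⬝ᵥ ψ j = if i = j then 1 else 0

/-- Outcome distribution of the measurement `ψ` on the state `ρ`. -/
noncomputable def outcome {n : ℕ} (ρ : Matrix (Fin n) (Fin n) ℂ)
    (ψ : Fin n → (Fin n → ℂ)) : Fin n → ℝ :=
  fun i => (star (ψ i) ⬝ᵥ (ρ *ᵥ ψ i)).re

/-- Vector of diagonal entries of `ρ` (real parts). -/
noncomputable def diagVec {n : ℕ} (ρ : Matrix (Fin n) (Fin n) ℂ) : Fin n → ℝ :=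
  fun i => (ρ i i).re

/-- `c` is the majorization join of `a` and `b`. -/
def IsMajJoin {n : ℕ} (a b c : Fin n → ℝ) : Prop :=
  IsProbVec c ∧ Maj a c ∧ Maj b c ∧
    ∀ c', IsProbVec c' → Maj a c' → Maj b c' → Maj c c'

/-- `c` is the majorization meet of the set `X`. -/
def IsMajMeet {n : ℕ} (X : Set (Fin n → ℝ)) (c : Fin n → ℝ) : Prop :=
  IsProbVec c ∧ (∀ p ∈ X, Maj c p) ∧
    ∀ c', IsProbVec c' → (∀ p ∈ X, Maj c' p) → Maj c' c






/-- extension by zero -/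
noncomputable def ext0 {n : ℕ} (s : Fin n → ℝ) : ℕ → ℝ :=
  fun i => if h : i < n then s ⟨i, h⟩ else 0

lemma sortDesc_antitone {n : ℕ} (x : Fin n → ℝ) : Antitone (sortDesc x) := by
  intro i j hij
  exact Tuple.monotone_sort x (Fin.rev_le_rev.mpr hij)

/-- the sorting permutation -/
noncomputable def sortPerm {n : ℕ} (x : Fin n → ℝ) : Equiv.Perm (Fin n) :=
  (Fin.revPerm).trans (Tuple.sort x)

lemma sortDesc_eq {n : ℕ} (x : Fin n → ℝ) : sortDesc x = x ∘ (sortPerm x) := rfl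

lemma sum_comp_sortDesc {n : ℕ} (x : Fin n → ℝ) (g : ℝ → ℝ) :
    ∑ i, g (sortDesc x i) = ∑ i, g (x i) :=
  Equiv.sum_comp (sortPerm x) (g ∘ x)

lemma sum_sortDesc {n : ℕ} (x : Fin n → ℝ) : ∑ i, sortDesc x i = ∑ i, x i :=
  Equiv.sum_comp (sortPerm x) x

lemma topSum_eq_range {n : ℕ} (x : Fin n → ℝ) (k : ℕ) :
    topSum x k = ∑ i ∈ Finset.range k, ext0 (sortDesc x) i := by
  have h1 : topSum x k = ∑ m ∈ (Finset.range n).filter (· < k), ext0 (sortDesc x) m := by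
    rw [topSum, Finset.sum_filter, Finset.sum_filter]
    rw [← Fin.sum_univ_eq_sum_range (fun m => if m < k then ext0 (sortDesc x) m else 0) n]
    congr 1; ext i
    congr 1
    simp [ext0, i.isLt]
  have h2 : ∑ i ∈ Finset.range k, ext0 (sortDesc x) i
      = ∑ m ∈ (Finset.range k).filter (· < n), ext0 (sortDesc x) m := by
    refine (Finset.sum_subset (Finset.filter_subset _ _) ?_).symm
    intro m hmk hm
    have : ¬ m < n := fun h => hm (Finset.mem_filter.2 ⟨hmk, h⟩)
    simp [ext0, this]
  rw [h1, h2]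
  congr 1
  ext m; simp only [Finset.mem_filter, Finset.mem_range]; omega

lemma topSum_of_ge {n : ℕ} (x : Fin n → ℝ) {k : ℕ} (hk : n ≤ k) :
    topSum x k = ∑ i, x i := by
  rw [topSum, ← sum_sortDesc x]
  congr 1
  ext i; simp [lt_of_lt_of_le i.isLt hk]

lemma card_filter_lt {n k : ℕ} :
    (Finset.univ.filter (fun i : Fin n => (i : ℕ) < k)).card = min k n := by
  classical
  have : (Finset.univ.filter (fun i : Fin n => (i : ℕ) < k)).card
      = ((Finset.range n).filter (· < k)).card := by
    refine Finset.card_bij (fun a _ => (a : ℕ)) ?_ ?_ ?_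
    · intro a ha
      simp only [Finset.mem_filter, Finset.mem_univ, true_and] at ha
      simp only [Finset.mem_filter, Finset.mem_range]
      exact ⟨a.isLt, ha⟩
    · intro a ha b hb h; exact Fin.val_injective h
    · intro b hb
      simp only [Finset.mem_filter, Finset.mem_range] at hb
      exact ⟨⟨b, hb.1⟩, by simp [hb.2], rfl⟩
  rw [this]
  have : (Finset.range n).filter (· < k) = Finset.range (min k n) := by
    ext m; simp only [Finset.mem_filter, Finset.mem_range]; omega
  rw [this, Finset.card_range]

lemma topSum_exists_subset {n : ℕ} (x : Fin n → ℝ) (k : ℕ) :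
    ∃ S : Finset (Fin n), S.card = min k n ∧ topSum x k = ∑ i ∈ S, x i := by
  classical
  refine ⟨(Finset.univ.filter (fun i : Fin n => (i : ℕ) < k)).image (sortPerm x), ?_, ?_⟩
  · rw [Finset.card_image_of_injective _ (sortPerm x).injective, card_filter_lt]
  · rw [Finset.sum_image (fun a _ b _ h => (sortPerm x).injective h)]
    rfl

lemma ext0_nonneg {n : ℕ} {s : Fin n → ℝ} (hs : ∀ i, 0 ≤ s i) (m : ℕ) : 0 ≤ ext0 s m := by
  unfold ext0; split <;> simp [hs]

lemma sortDesc_nonneg {n : ℕ} {x : Fin n → ℝ} (hx : ∀ i, 0 ≤ x i) (i : Fin n) :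
    0 ≤ sortDesc x i := hx _

lemma topSum_mono {n : ℕ} {x : Fin n → ℝ} (hx : ∀ i, 0 ≤ x i) {k k' : ℕ} (h : k ≤ k') :
    topSum x k ≤ topSum x k' := by
  rw [topSum_eq_range, topSum_eq_range]
  exact Finset.sum_le_sum_of_subset_of_nonneg (Finset.range_subset_range.2 h)
    (fun m _ _ => ext0_nonneg (sortDesc_nonneg hx) m)

lemma maj_trans {n : ℕ} {a b c : Fin n → ℝ} (h1 : Maj a b) (h2 : Maj b c) : Maj a c :=
  fun k => le_trans (h1 k) (h2 k)

/-- key linear bound -/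
lemma sum_mul_le_topSum {n : ℕ} {x t : Fin n → ℝ} (hx : ∀ i, 0 ≤ x i)
    (ht0 : ∀ i, 0 ≤ t i) (ht1 : ∀ i, t i ≤ 1) {k : ℕ} (hts : ∑ i, t i ≤ (k : ℝ)) :
    ∑ i, x i * t i ≤ topSum x k := by
  rcases le_or_gt n k with hk | hk
  · rw [topSum_of_ge x hk]
    refine Finset.sum_le_sum (fun i _ => ?_)
    nlinarith [hx i, ht0 i, ht1 i]
  · set c := sortDesc x ⟨k, hk⟩ with hc
    have hc0 : 0 ≤ c := sortDesc_nonneg hx _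
    have step1 : ∑ i, x i * t i = (∑ i, (x i - c) * t i) + c * ∑ i, t i := by
      rw [Finset.mul_sum, ← Finset.sum_add_distrib]
      congr 1; ext i; ring
    have step2 : ∑ i, (x i - c) * t i ≤ ∑ i, max (x i - c) 0 := by
      refine Finset.sum_le_sum (fun i _ => ?_)
      rcases le_or_gt c (x i) with h | h
      · calc (x i - c) * t i ≤ (x i - c) * 1 := by nlinarith [ht1 i, ht0 i]
          _ ≤ max (x i - c) 0 := by rw [mul_one]; exact le_max_left _ _
      · calc (x i - c) * t i ≤ 0 := by nlinarith [ht0 i]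
          _ ≤ max (x i - c) 0 := le_max_right _ _
    have step3 : ∑ i, max (x i - c) 0 = ∑ i, max (sortDesc x i - c) 0 :=
      (sum_comp_sortDesc x (fun y => max (y - c) 0)).symm
    have step4 : ∑ i, max (sortDesc x i - c) 0
        = ∑ i ∈ Finset.univ.filter (fun i : Fin n => (i : ℕ) < k), (sortDesc x i - c) := by
      rw [← Finset.sum_filter_add_sum_filter_not Finset.univ
        (fun i : Fin n => (i : ℕ) < k) (fun i => max (sortDesc x i - c) 0)]
      have e1 : ∀ i ∈ Finset.univ.filter (fun i : Fin n => (i : ℕ) < k),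
          max (sortDesc x i - c) 0 = sortDesc x i - c := by
        intro i hi
        simp only [Finset.mem_filter] at hi
        have : (⟨k, hk⟩ : Fin n) ≤ ⟨k, hk⟩ := le_refl _
        have hle : c ≤ sortDesc x i := by
          apply sortDesc_antitone x
          exact Fin.le_def.mpr (by simpa using hi.2.le)
        simp [max_eq_left, sub_nonneg.mpr hle]
      have e2 : ∀ i ∈ Finset.univ.filter (fun i : Fin n => ¬ (i : ℕ) < k),
          max (sortDesc x i - c) 0 = 0 := by
        intro i hi
        simp only [Finset.mem_filter] at hi
        have hle : sortDesc x i ≤ c := by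
          apply sortDesc_antitone x
          exact Fin.le_def.mpr (by simpa using Nat.le_of_not_lt hi.2)
        simp [max_eq_right, sub_nonpos.mpr hle]
      rw [Finset.sum_congr rfl e1, Finset.sum_congr rfl e2, Finset.sum_const, smul_zero, add_zero]
    have step5 : ∑ i ∈ Finset.univ.filter (fun i : Fin n => (i : ℕ) < k), (sortDesc x i - c)
        = topSum x k - c * k := by
      rw [Finset.sum_sub_distrib, Finset.sum_const, card_filter_lt, topSum,
        min_eq_left hk.le, nsmul_eq_mul]
      ring
    have step6 : c * ∑ i, t i ≤ c * k := mul_le_mul_of_nonneg_left hts hc0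
    calc ∑ i, x i * t i = (∑ i, (x i - c) * t i) + c * ∑ i, t i := step1
      _ ≤ (topSum x k - c * k) + c * k := by
          have := step2.trans (le_of_eq (step3.trans (step4.trans step5)))
          linarith
      _ = topSum x k := by ring

/-- doubly stochastic matrices contract in the majorization order -/
lemma maj_of_bistochastic {n : ℕ} {B : Fin n → Fin n → ℝ} {x y : Fin n → ℝ}
    (hx : ∀ i, 0 ≤ x i)
    (hB0 : ∀ i j, 0 ≤ B i j) (hrow : ∀ i, ∑ j, B i j = 1) (hcol : ∀ j, ∑ i, B i j = 1)
    (hy : ∀ i, y i = ∑ j, B i j * x j) : Maj y x := by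
  intro k
  obtain ⟨S, hScard, hSsum⟩ := topSum_exists_subset y k
  rw [hSsum]
  have : ∑ i ∈ S, y i = ∑ j, x j * (∑ i ∈ S, B i j) := by
    simp_rw [hy, Finset.mul_sum]
    rw [Finset.sum_comm]
    congr 1; ext j; congr 1; ext i; ring
  rw [this]
  refine sum_mul_le_topSum hx ?_ ?_ ?_
  · intro j; exact Finset.sum_nonneg (fun i _ => hB0 i j)
  · intro j
    calc ∑ i ∈ S, B i j ≤ ∑ i, B i j :=
        Finset.sum_le_sum_of_subset_of_nonneg (Finset.subset_univ S) (fun i _ _ => hB0 i j)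
      _ = 1 := hcol j
  · rw [Finset.sum_comm]
    simp_rw [hrow]
    simp only [Finset.sum_const, nsmul_eq_mul, mul_one]
    rw [hScard]
    exact_mod_cast Nat.cast_le.mpr (min_le_left k n)

/-- pointwise tangent line bound for negMulLog -/
lemma negMulLog_tangent {x y : ℝ} (hx : 0 < x) (hy : 0 ≤ y) :
    Real.negMulLog y ≤ Real.negMulLog x + (-Real.log x - 1) * (y - x) := by
  rcases hy.eq_or_lt with h | hy'
  · simp only [← h, Real.negMulLog_zero, Real.negMulLog, neg_mul]
    nlinarith
  · have hdiv : (0:ℝ) < x / y := div_pos hx hy'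
    have key : Real.log (x / y) ≤ x / y - 1 := Real.log_le_sub_one_of_pos hdiv
    have hmul : y * Real.log (x / y) ≤ y * (x / y - 1) :=
      mul_le_mul_of_nonneg_left key hy'.le
    have hxy : y * (x / y) = x := by field_simp
    have hlog : Real.log (x / y) = Real.log x - Real.log y := Real.log_div hx.ne' hy'.ne'
    simp only [Real.negMulLog, neg_mul]
    nlinarith

lemma negMulLog_tangent_strict {x y : ℝ} (hx : 0 < x) (hy : 0 ≤ y) (hne : y ≠ x) :
    Real.negMulLog y < Real.negMulLog x + (-Real.log x - 1) * (y - x) := by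
  rcases hy.eq_or_lt with h | hy'
  · simp only [← h, Real.negMulLog_zero, Real.negMulLog, neg_mul]
    nlinarith
  · have hdiv : (0:ℝ) < x / y := div_pos hx hy'
    have hone : x / y ≠ 1 := by
      intro h
      rw [div_eq_one_iff_eq hy'.ne'] at h
      exact hne h.symm
    have key : Real.log (x / y) < x / y - 1 := Real.log_lt_sub_one_of_pos hdiv hone
    have hmul : y * Real.log (x / y) < y * (x / y - 1) :=
      (mul_lt_mul_iff_right₀ hy').mpr key
    have hxy : y * (x / y) = x := by field_simp
    have hlog : Real.log (x / y) = Real.log x - Real.log y := Real.log_div hx.ne' hy'.ne'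
    simp only [Real.negMulLog, neg_mul]
    nlinarith

/-- Abel-summation step of Karamata -/
lemma karamata_abel {u v : ℕ → ℝ} {m : ℕ}
    (hu : ∀ i < m, 0 < u i)
    (hmono : ∀ i, i + 1 < m → u (i + 1) ≤ u i)
    (hpar : ∀ k ≤ m, ∑ i ∈ Finset.range k, u i ≤ ∑ i ∈ Finset.range k, v i)
    (htot : ∑ i ∈ Finset.range m, u i = ∑ i ∈ Finset.range m, v i) :
    ∑ i ∈ Finset.range m, (-Real.log (u i) - 1) * (v i - u i) ≤ 0 := by
  set s : ℕ → ℝ := fun i => -Real.log (u i) - 1 with hs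
  set e : ℕ → ℝ := fun i => v i - u i with he
  have habel := Finset.sum_range_by_parts s e m
  simp only [smul_eq_mul] at habel
  have hGm : ∑ i ∈ Finset.range m, e i = 0 := by
    simp only [he, Finset.sum_sub_distrib]; linarith
  rw [habel, hGm, mul_zero, zero_sub, neg_nonpos]
  refine Finset.sum_nonneg (fun i hi => ?_)
  have him : i + 1 < m := by
    have := Finset.mem_range.mp hi; omega
  have h1 : u (i + 1) ≤ u i := hmono i him
  have hpos1 : 0 < u (i + 1) := hu _ him
  have hslope : 0 ≤ s (i + 1) - s i := by
    simp only [hs]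
    have := Real.log_le_log hpos1 h1
    linarith
  have hG : 0 ≤ ∑ j ∈ Finset.range (i + 1), e j := by
    have := hpar (i + 1) (by omega)
    simp only [he, Finset.sum_sub_distrib]
    linarith
  exact mul_nonneg hslope hG

/-- Karamata's inequality for negMulLog (core version, positive entries) -/
lemma karamata_core {u v : ℕ → ℝ} {m : ℕ}
    (hu : ∀ i < m, 0 < u i) (hv : ∀ i < m, 0 ≤ v i)
    (hmono : ∀ i, i + 1 < m → u (i + 1) ≤ u i)
    (hpar : ∀ k ≤ m, ∑ i ∈ Finset.range k, u i ≤ ∑ i ∈ Finset.range k, v i)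
    (htot : ∑ i ∈ Finset.range m, u i = ∑ i ∈ Finset.range m, v i) :
    ∑ i ∈ Finset.range m, Real.negMulLog (v i) ≤ ∑ i ∈ Finset.range m, Real.negMulLog (u i)
    ∧ ((∃ i < m, u i ≠ v i) →
      ∑ i ∈ Finset.range m, Real.negMulLog (v i) < ∑ i ∈ Finset.range m, Real.negMulLog (u i)) := by
  have habel := karamata_abel hu hmono hpar htot
  have hpt : ∀ i ∈ Finset.range m, Real.negMulLog (v i)
      ≤ Real.negMulLog (u i) + (-Real.log (u i) - 1) * (v i - u i) := by
    intro i hi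
    exact negMulLog_tangent (hu i (Finset.mem_range.mp hi)) (hv i (Finset.mem_range.mp hi))
  have hsum : ∑ i ∈ Finset.range m, (Real.negMulLog (u i) + (-Real.log (u i) - 1) * (v i - u i))
      = ∑ i ∈ Finset.range m, Real.negMulLog (u i)
        + ∑ i ∈ Finset.range m, (-Real.log (u i) - 1) * (v i - u i) :=
    Finset.sum_add_distrib
  constructor
  · calc ∑ i ∈ Finset.range m, Real.negMulLog (v i)
        ≤ ∑ i ∈ Finset.range m, (Real.negMulLog (u i) + (-Real.log (u i) - 1) * (v i - u i)) :=
          Finset.sum_le_sum hpt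
      _ ≤ ∑ i ∈ Finset.range m, Real.negMulLog (u i) := by rw [hsum]; linarith
  · rintro ⟨i0, hi0, hne⟩
    calc ∑ i ∈ Finset.range m, Real.negMulLog (v i)
        < ∑ i ∈ Finset.range m, (Real.negMulLog (u i) + (-Real.log (u i) - 1) * (v i - u i)) := by
          refine Finset.sum_lt_sum hpt ⟨i0, Finset.mem_range.mpr hi0, ?_⟩
          exact negMulLog_tangent_strict (hu i0 hi0) (hv i0 hi0) (Ne.symm hne)
      _ ≤ ∑ i ∈ Finset.range m, Real.negMulLog (u i) := by rw [hsum]; linarith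

/-- Karamata's inequality for negMulLog, allowing a zero tail in `u`. -/
lemma karamata {u v : ℕ → ℝ} {n : ℕ}
    (hu : ∀ i < n, 0 ≤ u i) (hv : ∀ i < n, 0 ≤ v i)
    (hmono : ∀ i, i + 1 < n → u (i + 1) ≤ u i)
    (hpar : ∀ k ≤ n, ∑ i ∈ Finset.range k, u i ≤ ∑ i ∈ Finset.range k, v i)
    (htot : ∑ i ∈ Finset.range n, u i = ∑ i ∈ Finset.range n, v i) :
    ∑ i ∈ Finset.range n, Real.negMulLog (v i) ≤ ∑ i ∈ Finset.range n, Real.negMulLog (u i)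
    ∧ ((∃ i < n, u i ≠ v i) →
      ∑ i ∈ Finset.range n, Real.negMulLog (v i) < ∑ i ∈ Finset.range n, Real.negMulLog (u i)) := by
  classical
  -- monotone chain for u
  have humono : ∀ a b : ℕ, a ≤ b → b < n → u b ≤ u a := by
    intro a b hab hbn
    induction b with
    | zero => simp at hab; simp [hab]
    | succ b ih =>
      rcases Nat.lt_or_ge a (b+1) with h | h
      · exact le_trans (hmono b hbn) (ih (by omega) (by omega))
      · have : a = b + 1 := by omega
        simp [this]
  -- the cutoff
  have hPn : ∀ i, n ≤ i → i < n → u i = 0 := fun i h1 h2 => absurd h2 (by omega)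
  have hex : ∃ j, ∀ i, j ≤ i → i < n → u i = 0 := ⟨n, hPn⟩
  set m := Nat.find hex with hm
  have hmspec : ∀ i, m ≤ i → i < n → u i = 0 := Nat.find_spec hex
  have hmn : m ≤ n := Nat.find_le hPn
  have hupos : ∀ i < m, 0 < u i := by
    intro i him
    have hnP := Nat.find_min hex him
    push_neg at hnP
    obtain ⟨i', hi'1, hi'2, hi'3⟩ := hnP
    have : 0 < u i' := lt_of_le_of_ne (hu i' hi'2) (Ne.symm hi'3)
    exact lt_of_lt_of_le this (humono i i' hi'1 hi'2)
  -- u vanishes on [m, n)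
  have hutail : ∀ i ∈ Finset.range n, i ∉ Finset.range m → u i = 0 := by
    intro i hi hni
    exact hmspec i (by simp at hni; omega) (Finset.mem_range.mp hi)
  have husum : ∑ i ∈ Finset.range m, u i = ∑ i ∈ Finset.range n, u i :=
    Finset.sum_subset (Finset.range_subset_range.2 hmn) hutail
  -- v vanishes on [m, n)
  have hvsum_le : ∑ i ∈ Finset.range m, v i ≤ ∑ i ∈ Finset.range n, v i :=
    Finset.sum_le_sum_of_subset_of_nonneg (Finset.range_subset_range.2 hmn)
      (fun i hi _ => hv i (Finset.mem_range.mp hi))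
  have hvm : ∑ i ∈ Finset.range m, v i = ∑ i ∈ Finset.range n, v i := by
    have h1 := hpar m hmn
    have : ∑ i ∈ Finset.range n, v i ≤ ∑ i ∈ Finset.range m, v i := by
      calc ∑ i ∈ Finset.range n, v i = ∑ i ∈ Finset.range m, u i := by rw [husum, htot]
        _ ≤ ∑ i ∈ Finset.range m, v i := h1
    linarith
  have hvtail : ∀ i ∈ Finset.range n, i ∉ Finset.range m → v i = 0 := by
    have hzero : ∑ i ∈ Finset.range n \ Finset.range m, v i = 0 := by
      have := Finset.sum_sdiff (Finset.range_subset_range.2 hmn) (f := v)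
      linarith
    intro i hi hni
    have := (Finset.sum_eq_zero_iff_of_nonneg (fun j hj =>
      hv j (Finset.mem_range.mp (Finset.mem_sdiff.mp hj).1))).mp hzero
    exact this i (Finset.mem_sdiff.mpr ⟨hi, hni⟩)
  -- apply the core
  have hcore := karamata_core hupos (fun i him => hv i (lt_of_lt_of_le him hmn))
    (fun i him => hmono i (lt_of_lt_of_le him hmn))
    (fun k hk => hpar k (le_trans hk hmn))
    (by rw [husum, hvm, htot])
  -- transfer sums from range m to range n
  have tu : ∑ i ∈ Finset.range m, Real.negMulLog (u i)
      = ∑ i ∈ Finset.range n, Real.negMulLog (u i) :=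
    Finset.sum_subset (Finset.range_subset_range.2 hmn)
      (fun i hi hni => by rw [hutail i hi hni, Real.negMulLog_zero])
  have tv : ∑ i ∈ Finset.range m, Real.negMulLog (v i)
      = ∑ i ∈ Finset.range n, Real.negMulLog (v i) :=
    Finset.sum_subset (Finset.range_subset_range.2 hmn)
      (fun i hi hni => by rw [hvtail i hi hni, Real.negMulLog_zero])
  constructor
  · rw [← tu, ← tv]; exact hcore.1
  · rintro ⟨i0, hi0, hne⟩
    rw [← tu, ← tv]
    refine hcore.2 ⟨i0, ?_, hne⟩
    by_contra h
    push_neg at h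
    have h1 : u i0 = 0 := hmspec i0 h hi0
    have h2 : v i0 = 0 := hvtail i0 (Finset.mem_range.mpr hi0) (by simp; omega)
    exact hne (by rw [h1, h2])



lemma shannon_eq {n : ℕ} (p : Fin n → ℝ) :
    shannon p = (∑ i, Real.negMulLog (p i)) / Real.log 2 := by
  rw [shannon, Finset.sum_div, ← Finset.sum_neg_distrib]
  congr 1; ext i
  rw [Real.negMulLog, Real.logb]
  ring

lemma sum_range_ext0 {n : ℕ} (s : Fin n → ℝ) (g : ℝ → ℝ) (hg : g 0 = 0) :
    ∑ i ∈ Finset.range n, g (ext0 s i) = ∑ i, g (s i) := by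
  rw [← Fin.sum_univ_eq_sum_range (fun m => g (ext0 s m)) n]
  congr 1; ext i
  simp [ext0, i.isLt]

/-- entropy is Schur concave: if `a ≺ b` then `S(b) ≤ S(a)`, strictly if `¬ b ≺ a`. -/
lemma shannon_le_of_maj {n : ℕ} {a b : Fin n → ℝ} (ha : IsProbVec a) (hb : IsProbVec b)
    (hm : Maj a b) :
    shannon b ≤ shannon a ∧ (¬ Maj b a → shannon b < shannon a) := by
  set u : ℕ → ℝ := ext0 (sortDesc a) with hu
  set v : ℕ → ℝ := ext0 (sortDesc b) with hv
  have hu0 : ∀ i < n, 0 ≤ u i := fun i _ => ext0_nonneg (sortDesc_nonneg ha.1) i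
  have hv0 : ∀ i < n, 0 ≤ v i := fun i _ => ext0_nonneg (sortDesc_nonneg hb.1) i
  have hmono : ∀ i, i + 1 < n → u (i + 1) ≤ u i := by
    intro i hi
    have h1 : i < n := by omega
    simp only [hu, ext0, dif_pos hi, dif_pos h1]
    exact sortDesc_antitone a (by simp [Fin.le_def])
  have hpar : ∀ k ≤ n, ∑ i ∈ Finset.range k, u i ≤ ∑ i ∈ Finset.range k, v i := by
    intro k _
    rw [← topSum_eq_range, ← topSum_eq_range]
    exact hm k
  have hsum_u : ∑ i ∈ Finset.range n, u i = 1 := by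
    have h := sum_range_ext0 (sortDesc a) (fun x => x) rfl
    rw [hu, h, sum_sortDesc]; exact ha.2
  have hsum_v : ∑ i ∈ Finset.range n, v i = 1 := by
    have h := sum_range_ext0 (sortDesc b) (fun x => x) rfl
    rw [hv, h, sum_sortDesc]; exact hb.2
  have htot : ∑ i ∈ Finset.range n, u i = ∑ i ∈ Finset.range n, v i := by
    rw [hsum_u, hsum_v]
  have hk := karamata hu0 hv0 hmono hpar htot
  have hlog2 : (0:ℝ) < Real.log 2 := Real.log_pos (by norm_num)
  have tb : ∑ i ∈ Finset.range n, Real.negMulLog (v i) = ∑ i, Real.negMulLog (b i) := by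
    rw [hv, sum_range_ext0 _ Real.negMulLog Real.negMulLog_zero,
      sum_comp_sortDesc b Real.negMulLog]
  have ta : ∑ i ∈ Finset.range n, Real.negMulLog (u i) = ∑ i, Real.negMulLog (a i) := by
    rw [hu, sum_range_ext0 _ Real.negMulLog Real.negMulLog_zero,
      sum_comp_sortDesc a Real.negMulLog]
  constructor
  · rw [shannon_eq, shannon_eq, ← ta, ← tb]
    exact (div_le_div_iff_of_pos_right hlog2).mpr hk.1
  · intro hnot
    rw [shannon_eq, shannon_eq, ← ta, ← tb]
    rw [div_lt_div_iff_of_pos_right hlog2]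
    refine hk.2 ?_
    by_contra h
    push_neg at h
    have heq : sortDesc b = sortDesc a := by
      funext i
      have := h i i.isLt
      simpa [hu, hv, ext0, i.isLt] using this.symm
    refine hnot (fun k => ?_)
    rw [topSum, topSum]
    exact le_of_eq (by rw [heq])




open Complex in
/-- completeness relation for an ONB -/
lemma onb_complete {n : ℕ} {ψ : Fin n → (Fin n → ℂ)} (hψ : IsONB ψ) (a b : Fin n) :
    ∑ i, ψ i a * star (ψ i b) = if a = b then 1 else 0 := by
  classical
  set M : Matrix (Fin n) (Fin n) ℂ := Matrix.of (fun i k => star (ψ i k)) with hM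
  have hMM : M * Mᴴ = 1 := by
    ext i j
    have h := hψ i j
    simp only [dotProduct, Pi.star_apply] at h
    simp only [Matrix.mul_apply, Matrix.conjTranspose_apply, hM, Matrix.of_apply,
      Matrix.one_apply, star_star]
    exact h
  have hMM' : Mᴴ * M = 1 := mul_eq_one_comm.mp hMM
  have h2 : (Mᴴ * M) a b = (1 : Matrix (Fin n) (Fin n) ℂ) a b := by rw [hMM']
  simp only [Matrix.mul_apply, Matrix.conjTranspose_apply, hM, Matrix.of_apply,
    Matrix.one_apply, star_star] at h2
  exact h2

lemma outcome_nonneg {n : ℕ} {ρ : Matrix (Fin n) (Fin n) ℂ} (hρ : ρ.PosSemidef)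
    (ψ : Fin n → (Fin n → ℂ)) (i : Fin n) : 0 ≤ outcome ρ ψ i := by
  have h := hρ.dotProduct_mulVec_nonneg (ψ i)
  rw [Complex.le_def] at h
  simpa [outcome] using h.1

/-- the outcome of a von Neumann measurement is majorized by the eigenvalue vector -/
lemma maj_outcome {n : ℕ} {ρ : Matrix (Fin n) (Fin n) ℂ} (hρ : ρ.PosSemidef)
    {ψ : Fin n → (Fin n → ℂ)} (hψ : IsONB ψ) :
    Maj (outcome ρ ψ) hρ.isHermitian.eigenvalues := by
  classical
  set lam := hρ.isHermitian.eigenvalues with hlam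
  set U : Matrix (Fin n) (Fin n) ℂ :=
    (Matrix.IsHermitian.eigenvectorUnitary hρ.isHermitian : Matrix (Fin n) (Fin n) ℂ) with hUdef
  set D : Matrix (Fin n) (Fin n) ℂ := Matrix.diagonal (RCLike.ofReal ∘ lam) with hD
  have hspec : ρ = U * D * star U := hρ.isHermitian.spectral_theorem
  have hU1 : U * star U = 1 :=
    Matrix.mem_unitaryGroup_iff.mp (Matrix.IsHermitian.eigenvectorUnitary hρ.isHermitian).2
  have hU2 : star U * U = 1 :=
    Matrix.mem_unitaryGroup_iff'.mp (Matrix.IsHermitian.eigenvectorUnitary hρ.isHermitian).2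
  set z : Fin n → Fin n → ℂ := fun i => (star U) *ᵥ ψ i with hzdef
  set B : Fin n → Fin n → ℝ := fun i j => Complex.normSq (z i j) with hB
  have hzstar : ∀ i, star (z i) = star (ψ i) ᵥ* U := by
    intro i
    rw [hzdef]
    rw [Matrix.star_mulVec]
    simp [Matrix.star_eq_conjTranspose]
  -- outcome formula
  have hout : ∀ i, outcome ρ ψ i = ∑ j, B i j * lam j := by
    intro i
    have h1 : star (ψ i) ⬝ᵥ (ρ *ᵥ ψ i) = star (z i) ⬝ᵥ (D *ᵥ z i) := by
      rw [hspec, ← Matrix.mulVec_mulVec, ← Matrix.mulVec_mulVec, hzstar,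
        ← Matrix.dotProduct_mulVec, Matrix.mulVec_mulVec]
    rw [outcome, h1]
    have h2 : ∀ j, (star (z i) j * (D *ᵥ z i) j) = ((lam j * B i j : ℝ) : ℂ) := by
      intro j
      rw [hD, Matrix.mulVec_diagonal]
      simp only [Function.comp_apply, Pi.star_apply, RCLike.star_def]
      have hc : (RCLike.ofReal (lam j) : ℂ) = Complex.ofReal (lam j) := rfl
      rw [hc, show (starRingEnd ℂ) (z i j) * ((lam j : ℂ) * z i j)
          = (lam j : ℂ) * (z i j * (starRingEnd ℂ) (z i j)) from by ring, Complex.mul_conj]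
      push_cast
      ring
    rw [dotProduct, Complex.re_sum]
    congr 1; ext j
    rw [h2 j, Complex.ofReal_re, mul_comm]
  -- row sums
  have hrow : ∀ i, ∑ j, B i j = 1 := by
    intro i
    have h1 : star (z i) ⬝ᵥ z i = 1 := by
      rw [hzstar, ← Matrix.dotProduct_mulVec, Matrix.mulVec_mulVec, hU1, Matrix.one_mulVec]
      have := hψ i i
      simpa using this
    have h2 : star (z i) ⬝ᵥ z i = ((∑ j, B i j : ℝ) : ℂ) := by
      rw [dotProduct]
      push_cast
      congr 1; ext j
      simp only [Pi.star_apply, RCLike.star_def, hB]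
      rw [mul_comm, Complex.mul_conj]
    rw [h2] at h1
    exact_mod_cast h1
  -- column sums
  have hz : ∀ i j, z i j = ∑ a, star (U a j) * ψ i a := by
    intro i j
    simp [hzdef, Matrix.mulVec, dotProduct, Matrix.star_apply]
  have hcolC : ∀ j, ∑ i, ((B i j : ℝ) : ℂ) = 1 := by
    intro j
    have expand : ∀ i, ((B i j : ℝ) : ℂ)
        = ∑ a, ∑ b, (star (U a j) * U b j) * (ψ i a * star (ψ i b)) := by
      intro i
      have h0 : ((B i j : ℝ) : ℂ) = z i j * star (z i j) := by
        simp only [hB, RCLike.star_def]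
        rw [Complex.mul_conj]
      rw [h0, hz i j]
      rw [show star (∑ a, star (U a j) * ψ i a) = ∑ b, U b j * star (ψ i b) by
        rw [star_sum]; congr 1; ext b; rw [star_mul', star_star]]
      rw [Finset.sum_mul_sum]
      congr 1; ext a; congr 1; ext b
      ring
    simp_rw [expand]
    rw [Finset.sum_comm]
    have : ∀ a, ∑ i, ∑ b, (star (U a j) * U b j) * (ψ i a * star (ψ i b))
        = star (U a j) * U a j := by
      intro a
      rw [Finset.sum_comm]
      have : ∀ b, ∑ i, (star (U a j) * U b j) * (ψ i a * star (ψ i b))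
          = (star (U a j) * U b j) * (if a = b then 1 else 0) := by
        intro b
        rw [← Finset.mul_sum, onb_complete hψ a b]
      simp_rw [this]
      simp [Finset.sum_ite_eq, mul_ite]
    simp_rw [this]
    have h3 : (star U * U) j j = ∑ a, star (U a j) * U a j := by
      simp [Matrix.mul_apply, Matrix.star_apply]
    rw [← h3, hU2]
    simp [Matrix.one_apply]
  have hcol : ∀ j, ∑ i, B i j = 1 := by
    intro j
    have := hcolC j
    push_cast at this
    exact_mod_cast this
  exact maj_of_bistochastic (fun j => hρ.eigenvalues_nonneg j)
    (fun i j => Complex.normSq_nonneg _) hrow hcol hout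

/-- the standard basis is an ONB -/
lemma stdONB {n : ℕ} : IsONB (fun i : Fin n => (Pi.single i 1 : Fin n → ℂ)) := by
  intro i j
  simp only [dotProduct, Pi.star_apply, Pi.single_apply, apply_ite (star : ℂ → ℂ), star_one,
    star_zero, ite_mul, one_mul, zero_mul, mul_ite, mul_one, mul_zero]
  rw [Finset.sum_ite_eq' Finset.univ j (fun x => if x = i then (1:ℂ) else 0)]
  simp [eq_comm]

lemma outcome_std {n : ℕ} (ρ : Matrix (Fin n) (Fin n) ℂ) :
    outcome ρ (fun i : Fin n => (Pi.single i 1 : Fin n → ℂ)) = diagVec ρ := by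
  funext i
  rw [outcome, diagVec]
  congr 1
  rw [Matrix.mulVec_single]
  simp [dotProduct, Pi.single_apply, apply_ite]

/-- if `ρ` is diagonal, any measurement outcome is majorized by the diagonal -/
lemma maj_outcome_diag {n : ℕ} {ρ : Matrix (Fin n) (Fin n) ℂ} (hρ : ρ.PosSemidef)
    {ψ : Fin n → (Fin n → ℂ)} (hψ : IsONB ψ)
    (hdiag : ∀ i j, i ≠ j → ρ i j = 0) (hd0 : ∀ i, 0 ≤ diagVec ρ i) :
    Maj (outcome ρ ψ) (diagVec ρ) := by
  classical
  set B : Fin n → Fin n → ℝ := fun i j => Complex.normSq (ψ i j) with hB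
  have hdd : ∀ b, ρ b b = ((diagVec ρ b : ℝ) : ℂ) := by
    intro b
    have h := congrFun (congrFun hρ.isHermitian b) b
    rw [Matrix.conjTranspose_apply] at h
    exact (Complex.conj_eq_iff_re.mp (by simpa using h)).symm
  have hout : ∀ i, outcome ρ ψ i = ∑ j, B i j * diagVec ρ j := by
    intro i
    rw [outcome, dotProduct]
    have hmv : ∀ b, (ρ *ᵥ ψ i) b = ρ b b * ψ i b := by
      intro b
      rw [Matrix.mulVec, dotProduct]
      rw [Finset.sum_eq_single b]
      · intro a _ ha
        rw [hdiag b a (Ne.symm ha), zero_mul]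
      · intro h; exact absurd (Finset.mem_univ b) h
    simp_rw [hmv, hdd]
    rw [Complex.re_sum]
    congr 1; ext b
    have : star (ψ i) b * (((diagVec ρ b : ℝ) : ℂ) * ψ i b)
        = ((diagVec ρ b : ℝ) : ℂ) * (ψ i b * (starRingEnd ℂ) (ψ i b)) := by
      simp only [Pi.star_apply, RCLike.star_def]
      ring
    rw [this, Complex.mul_conj, ← Complex.ofReal_mul, Complex.ofReal_re, hB]
    ring
  have hrow : ∀ i, ∑ j, B i j = 1 := by
    intro i
    have h := hψ i i
    simp only [if_pos] at h
    have h2 : star (ψ i) ⬝ᵥ ψ i = ((∑ j, B i j : ℝ) : ℂ) := by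
      rw [dotProduct]
      push_cast
      congr 1; ext j
      simp only [Pi.star_apply, RCLike.star_def, hB]
      rw [mul_comm, Complex.mul_conj]
    rw [h2] at h
    exact_mod_cast h
  have hcol : ∀ j, ∑ i, B i j = 1 := by
    intro j
    have h := onb_complete hψ j j
    simp only [if_pos] at h
    have h2 : ∑ i, ψ i j * star (ψ i j) = ((∑ i, B i j : ℝ) : ℂ) := by
      push_cast
      congr 1; ext i
      simp only [RCLike.star_def, hB]
      rw [Complex.mul_conj]
    rw [h2] at h
    exact_mod_cast h
  exact maj_of_bistochastic hd0 (fun i j => Complex.normSq_nonneg _) hrow hcol hout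



lemma eigenvalues_sum_one {n : ℕ} {ρ : Matrix (Fin n) (Fin n) ℂ} (hρ : ρ.PosSemidef)
    (htr : ρ.trace = 1) : ∑ i, hρ.isHermitian.eigenvalues i = 1 := by
  classical
  set U : Matrix (Fin n) (Fin n) ℂ :=
    (Matrix.IsHermitian.eigenvectorUnitary hρ.isHermitian : Matrix (Fin n) (Fin n) ℂ) with hUdef
  have hspec : ρ = U * Matrix.diagonal (RCLike.ofReal ∘ hρ.isHermitian.eigenvalues) * star U :=
    hρ.isHermitian.spectral_theorem
  have hU2 : star U * U = 1 :=
    Matrix.mem_unitaryGroup_iff'.mp (Matrix.IsHermitian.eigenvectorUnitary hρ.isHermitian).2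
  have h : ρ.trace = ∑ i, ((hρ.isHermitian.eigenvalues i : ℝ) : ℂ) := by
    have h0 : (U * Matrix.diagonal (RCLike.ofReal ∘ hρ.isHermitian.eigenvalues) * star U).trace
        = ∑ i, ((hρ.isHermitian.eigenvalues i : ℝ) : ℂ) := by
      rw [Matrix.trace_mul_comm, ← Matrix.mul_assoc, hU2, Matrix.one_mul,
        Matrix.trace_diagonal]
      rfl
    rw [← hspec] at h0
    exact h0
  rw [htr] at h
  exact_mod_cast h.symm


/-- If the outcome distribution `p` of a von Neumann measurement on `ρ`
is not majorized by the diagonal `d` of `ρ`, then `ρ` is coherent and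
`C_r(ρ) ≥ S(d) − S(d ∨ p) > 0`. -/
theorem stmt4 {n : ℕ} (ρ : Matrix (Fin n) (Fin n) ℂ)
    (hρ : ρ.PosSemidef) (htr : ρ.trace = 1)
    (ψ : Fin n → (Fin n → ℂ)) (hψ : IsONB ψ)
    (hnm : ¬ Maj (outcome ρ ψ) (diagVec ρ)) :
    (∃ i j, i ≠ j ∧ ρ i j ≠ 0) ∧
    ∀ c, IsMajJoin (diagVec ρ) (outcome ρ ψ) c →
      shannon (diagVec ρ) - shannon c
          ≤ shannon (diagVec ρ) - shannon hρ.isHermitian.eigenvalues ∧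
      0 < shannon (diagVec ρ) - shannon c := by
  have hd0 : ∀ i, 0 ≤ diagVec ρ i := by
    intro i
    have := outcome_nonneg hρ (fun i : Fin n => (Pi.single i 1 : Fin n → ℂ)) i
    rwa [outcome_std] at this
  have hdsum : ∑ i, diagVec ρ i = 1 := by
    have h := congrArg Complex.re htr
    rw [Matrix.trace, Complex.re_sum] at h
    simpa [Matrix.diag_apply, diagVec] using h
  have hdprob : IsProbVec (diagVec ρ) := ⟨hd0, hdsum⟩
  have hlamprob : IsProbVec hρ.isHermitian.eigenvalues :=
    ⟨fun i => hρ.eigenvalues_nonneg i, eigenvalues_sum_one hρ htr⟩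
  have hplam : Maj (outcome ρ ψ) hρ.isHermitian.eigenvalues := maj_outcome hρ hψ
  have hdlam : Maj (diagVec ρ) hρ.isHermitian.eigenvalues := by
    have := maj_outcome hρ (stdONB (n := n))
    rwa [outcome_std] at this
  refine ⟨?_, ?_⟩
  · by_contra h
    push_neg at h
    exact hnm (maj_outcome_diag hρ hψ h hd0)
  · rintro c ⟨hcprob, hdc, hpc, hmin⟩
    have hclam : Maj c hρ.isHermitian.eigenvalues := hmin _ hlamprob hdlam hplam
    have h1 := (shannon_le_of_maj hcprob hlamprob hclam).1
    have hncd : ¬ Maj c (diagVec ρ) := fun h => hnm (maj_trans hpc h)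
    have h2 := (shannon_le_of_maj hdprob hcprob hdc).2 hncd
    exact ⟨by linarith, by linarith⟩
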